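/- Let (V₀, ω₀), (V₁, ω₁), (V₂, ω₂) be symplectic vector spaces and let Λ ⊆ V₀ × V₁ × V₁ × V₂ be a Lagrangian subspace for ω₀₁₁₂ satisfying the transversality condition Λ + K = V₀ × V₁ × V₁ × V₂. Then the projection π₀₂ is injective on Λ ∩ K, and the image π₀₂(Λ ∩ K) is a Lagrangian subspace of (V₀ × V₂, (−ω₀) ⊕ ω₂). -/

import Mathlib

open LinearMap Submodule

/-- The symplectic complement of a subspace `W` with respect to a bilinear form `ω`. -/
def symplComp {V : Type*} [AddCommGroup V] [Module ℝ V]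
    (ω : V →ₗ[ℝ] V →ₗ[ℝ] ℝ) (W : Submodule ℝ V) : Submodule ℝ V where
  carrier := {v | ∀ w ∈ W, ω v w = 0}
  zero_mem' := by intro w _; simp
  add_mem' := by intro a b ha hb w hw; simp [ha w hw, hb w hw]
  smul_mem' := by intro c a ha w hw; simp [ha w hw]

/-- `ω` is a (linear) symplectic form: alternating and nondegenerate. -/
structure IsSymplecticForm {V : Type*} [AddCommGroup V] [Module ℝ V]
    (ω : V →ₗ[ℝ] V →ₗ[ℝ] ℝ) : Prop where
  alternating : ∀ v, ω v v = 0
  nondeg : ∀ v, (∀ w, ω v w = 0) → v = 0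

/-- A subspace is Lagrangian iff it equals its symplectic complement. -/
def IsLagrangian {V : Type*} [AddCommGroup V] [Module ℝ V]
    (ω : V →ₗ[ℝ] V →ₗ[ℝ] ℝ) (Λ : Submodule ℝ V) : Prop :=
  Λ = symplComp ω Λ

/-- The symplectic form `(−ω₀) ⊕ ω₁` on `V₀ × V₁`. -/
def prodFormNegPos {V₀ V₁ : Type*} [AddCommGroup V₀] [Module ℝ V₀]
    [AddCommGroup V₁] [Module ℝ V₁]
    (ω₀ : V₀ →ₗ[ℝ] V₀ →ₗ[ℝ] ℝ) (ω₁ : V₁ →ₗ[ℝ] V₁ →ₗ[ℝ] ℝ) :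
    (V₀ × V₁) →ₗ[ℝ] (V₀ × V₁) →ₗ[ℝ] ℝ :=
  LinearMap.mk₂ ℝ (fun x y => - ω₀ x.1 y.1 + ω₁ x.2 y.2)
    (by intro x x' y
        simp only [Prod.fst_add, Prod.snd_add, map_add, LinearMap.add_apply]; ring)
    (by intro c x y
        simp only [Prod.smul_fst, Prod.smul_snd, map_smul, LinearMap.smul_apply,
          smul_eq_mul]; ring)
    (by intro x y y'
        simp only [Prod.fst_add, Prod.snd_add, map_add, LinearMap.add_apply]; ring)
    (by intro c x y
        simp only [Prod.smul_fst, Prod.smul_snd, map_smul, LinearMap.smul_apply,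
          smul_eq_mul]; ring)

/-- The symplectic form `ω₀₁₁₂ = (−ω₀) ⊕ ω₁ ⊕ (−ω₁) ⊕ ω₂` on `(V₀ × V₁) × (V₁ × V₂)`. -/
def form0112 {V₀ V₁ V₂ : Type*} [AddCommGroup V₀] [Module ℝ V₀]
    [AddCommGroup V₁] [Module ℝ V₁] [AddCommGroup V₂] [Module ℝ V₂]
    (ω₀ : V₀ →ₗ[ℝ] V₀ →ₗ[ℝ] ℝ) (ω₁ : V₁ →ₗ[ℝ] V₁ →ₗ[ℝ] ℝ)
    (ω₂ : V₂ →ₗ[ℝ] V₂ →ₗ[ℝ] ℝ) :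
    ((V₀ × V₁) × (V₁ × V₂)) →ₗ[ℝ] ((V₀ × V₁) × (V₁ × V₂)) →ₗ[ℝ] ℝ :=
  LinearMap.mk₂ ℝ
    (fun x y => - ω₀ x.1.1 y.1.1 + ω₁ x.1.2 y.1.2 - ω₁ x.2.1 y.2.1 + ω₂ x.2.2 y.2.2)
    (by intro x x' y
        simp only [Prod.fst_add, Prod.snd_add, map_add, LinearMap.add_apply]; ring)
    (by intro c x y
        simp only [Prod.smul_fst, Prod.smul_snd, map_smul, LinearMap.smul_apply,
          smul_eq_mul]; ring)
    (by intro x y y'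
        simp only [Prod.fst_add, Prod.snd_add, map_add, LinearMap.add_apply]; ring)
    (by intro c x y
        simp only [Prod.smul_fst, Prod.smul_snd, map_smul, LinearMap.smul_apply,
          smul_eq_mul]; ring)

/-- `K = V₀ × Δ₁ × V₂`, the product of the full spaces with the diagonal of `V₁`. -/
def Kdiag {V₀ V₁ V₂ : Type*} [AddCommGroup V₀] [Module ℝ V₀]
    [AddCommGroup V₁] [Module ℝ V₁] [AddCommGroup V₂] [Module ℝ V₂] :
    Submodule ℝ ((V₀ × V₁) × (V₁ × V₂)) where
  carrier := {x | x.1.2 = x.2.1}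
  zero_mem' := rfl
  add_mem' := by
    intro a b ha hb
    simp only [Set.mem_setOf_eq] at ha hb ⊢
    show a.1.2 + b.1.2 = a.2.1 + b.2.1
    rw [ha, hb]
  smul_mem' := by
    intro c a ha
    simp only [Set.mem_setOf_eq] at ha ⊢
    show c • a.1.2 = c • a.2.1
    rw [ha]

/-- The projection `π₀₂ : V₀ × V₁ × V₁ × V₂ → V₀ × V₂` onto the outer factors. -/
def proj02 {V₀ V₁ V₂ : Type*} [AddCommGroup V₀] [Module ℝ V₀]
    [AddCommGroup V₁] [Module ℝ V₁] [AddCommGroup V₂] [Module ℝ V₂] :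
    ((V₀ × V₁) × (V₁ × V₂)) →ₗ[ℝ] V₀ × V₂ where
  toFun x := (x.1.1, x.2.2)
  map_add' _ _ := rfl
  map_smul' _ _ := rfl

/-!
On `K` the form `ω₀₁₁₂` is the pull-back of `(−ω₀) ⊕ ω₂` along `π₀₂`, and `K^ω = ker π₀₂ ∩ K`.
Hence `Λ ∩ K ∩ ker π₀₂ = Λ^ω ∩ K^ω = (Λ + K)^ω = 0`, which is injectivity. The image
`π₀₂(Λ ∩ K)` is isotropic because `Λ` is. It is coisotropic because `(Λ ∩ K)^ω = Λ + K^ω`: a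
vector `(a, c)` orthogonal to the image lifts to `(a, 0, 0, c) ∈ (Λ ∩ K)^ω`, and the `Λ`-component
of that vector lies in `Λ ∩ K` and projects to `(a, c)`.
-/

namespace IsSymplecticForm

variable {V : Type*} [AddCommGroup V] [Module ℝ V] {ω : V →ₗ[ℝ] V →ₗ[ℝ] ℝ}

lemma isAlt (hω : IsSymplecticForm ω) : ω.IsAlt := hω.alternating

lemma isRefl (hω : IsSymplecticForm ω) : ω.IsRefl := hω.isAlt.isRefl

lemma nondegenerate (hω : IsSymplecticForm ω) : ω.Nondegenerate :=
  hω.isRefl.nondegenerate_iff_separatingLeft.2 hω.nondeg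

end IsSymplecticForm

section SymplecticComplement

variable {V : Type*} [AddCommGroup V] [Module ℝ V] {ω : V →ₗ[ℝ] V →ₗ[ℝ] ℝ}

lemma mem_symplComp {W : Submodule ℝ V} {v : V} :
    v ∈ symplComp ω W ↔ ∀ w ∈ W, ω v w = 0 := Iff.rfl

lemma symplComp_sup (W U : Submodule ℝ V) :
    symplComp ω (W ⊔ U) = symplComp ω W ⊓ symplComp ω U := by
  ext v
  simp only [mem_symplComp, mem_inf]
  refine ⟨fun h => ⟨fun w hw => h w (mem_sup_left hw), fun u hu => h u (mem_sup_right hu)⟩, ?_⟩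
  rintro ⟨hW, hU⟩ _ hx
  obtain ⟨w, hw, u, hu, rfl⟩ := mem_sup.mp hx
  rw [map_add, hW w hw, hU u hu, add_zero]

lemma symplComp_top (hω : ω.SeparatingLeft) : symplComp ω ⊤ = ⊥ :=
  eq_bot_iff.2 fun v hv => (mem_bot ℝ).2 (hω v fun w => hv w mem_top)

lemma symplComp_eq_orthogonal (hω : ω.IsRefl) (W : Submodule ℝ V) :
    symplComp ω W = BilinForm.orthogonal ω W := by
  ext v
  exact forall₂_congr fun w _ => hω.eq_iff

lemma symplComp_symplComp [FiniteDimensional ℝ V] (hω : IsSymplecticForm ω)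
    (W : Submodule ℝ V) : symplComp ω (symplComp ω W) = W := by
  simp only [symplComp_eq_orthogonal hω.isRefl]
  exact BilinForm.orthogonal_orthogonal hω.nondegenerate hω.isRefl W

lemma symplComp_inf [FiniteDimensional ℝ V] (hω : IsSymplecticForm ω) (W U : Submodule ℝ V) :
    symplComp ω (W ⊓ U) = symplComp ω W ⊔ symplComp ω U := by
  conv_lhs => rw [← symplComp_symplComp hω W, ← symplComp_symplComp hω U, ← symplComp_sup]
  exact symplComp_symplComp hω _

end SymplecticComplement

section Composition

variable {V₀ V₁ V₂ : Type*} [AddCommGroup V₀] [Module ℝ V₀] [AddCommGroup V₁] [Module ℝ V₁]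
  [AddCommGroup V₂] [Module ℝ V₂]
  {ω₀ : V₀ →ₗ[ℝ] V₀ →ₗ[ℝ] ℝ} {ω₁ : V₁ →ₗ[ℝ] V₁ →ₗ[ℝ] ℝ} {ω₂ : V₂ →ₗ[ℝ] V₂ →ₗ[ℝ] ℝ}
  {Λ : Submodule ℝ ((V₀ × V₁) × (V₁ × V₂))}

@[simp]
lemma form0112_apply (x y : (V₀ × V₁) × (V₁ × V₂)) :
    form0112 ω₀ ω₁ ω₂ x y =
      -ω₀ x.1.1 y.1.1 + ω₁ x.1.2 y.1.2 - ω₁ x.2.1 y.2.1 + ω₂ x.2.2 y.2.2 := rfl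

@[simp]
lemma prodFormNegPos_apply (p q : V₀ × V₂) :
    prodFormNegPos ω₀ ω₂ p q = -ω₀ p.1 q.1 + ω₂ p.2 q.2 := rfl

@[simp]
lemma proj02_apply (x : (V₀ × V₁) × (V₁ × V₂)) : proj02 x = (x.1.1, x.2.2) := rfl

lemma mem_Kdiag {x : (V₀ × V₁) × (V₁ × V₂)} : x ∈ Kdiag ↔ x.1.2 = x.2.1 := Iff.rfl

lemma separatingLeft_form0112 (h₀ : ω₀.SeparatingLeft) (h₁ : ω₁.SeparatingLeft)
    (h₂ : ω₂.SeparatingLeft) : (form0112 ω₀ ω₁ ω₂).SeparatingLeft := by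
  rintro ⟨⟨a, b⟩, c, d⟩ h
  have ha := h₀ a fun w => by simpa using h ((w, 0), (0, 0))
  have hb := h₁ b fun w => by simpa using h ((0, w), (0, 0))
  have hc := h₁ c fun w => by simpa using h ((0, 0), (w, 0))
  have hd := h₂ d fun w => by simpa using h ((0, 0), (0, w))
  simp [ha, hb, hc, hd]

lemma IsSymplecticForm.form0112 (h₀ : IsSymplecticForm ω₀) (h₁ : IsSymplecticForm ω₁)
    (h₂ : IsSymplecticForm ω₂) : IsSymplecticForm (form0112 ω₀ ω₁ ω₂) where
  alternating v := by simp [h₀.alternating, h₁.alternating, h₂.alternating]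
  nondeg := separatingLeft_form0112 h₀.nondeg h₁.nondeg h₂.nondeg

lemma symplComp_Kdiag (h₀ : ω₀.SeparatingLeft) (h₁ : ω₁.SeparatingLeft)
    (h₂ : ω₂.SeparatingLeft) :
    symplComp (form0112 ω₀ ω₁ ω₂) Kdiag = ker proj02 ⊓ Kdiag := by
  ext ⟨⟨a, b⟩, c, d⟩
  simp only [mem_symplComp, mem_inf, mem_ker, mem_Kdiag, proj02_apply, Prod.mk_eq_zero]
  constructor
  · intro h
    have ha := h₀ a fun w => by simpa using h ((w, 0), (0, 0)) rfl
    have hd := h₂ d fun w => by simpa using h ((0, 0), (0, w)) rfl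
    have hbc := h₁ (b - c) fun w => by
      simpa [sub_eq_zero] using h ((0, w), (w, 0)) rfl
    exact ⟨⟨ha, hd⟩, sub_eq_zero.1 hbc⟩
  · rintro ⟨⟨rfl, rfl⟩, rfl⟩ w hw
    simp [hw]

lemma form0112_eq_of_mem_Kdiag {x y : (V₀ × V₁) × (V₁ × V₂)} (hx : x ∈ Kdiag)
    (hy : y ∈ Kdiag) :
    form0112 ω₀ ω₁ ω₂ x y = prodFormNegPos ω₀ ω₂ (proj02 x) (proj02 y) := by
  rw [mem_Kdiag] at hx hy
  simp [hx, hy]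

lemma form0112_outer (p : V₀ × V₂) (w : (V₀ × V₁) × (V₁ × V₂)) :
    form0112 ω₀ ω₁ ω₂ ((p.1, 0), (0, p.2)) w = prodFormNegPos ω₀ ω₂ p (proj02 w) := by
  simp

lemma injOn_proj02 (h₀ : ω₀.SeparatingLeft) (h₁ : ω₁.SeparatingLeft)
    (h₂ : ω₂.SeparatingLeft) (hΛ : IsLagrangian (form0112 ω₀ ω₁ ω₂) Λ)
    (htrans : Λ ⊔ Kdiag = ⊤) :
    Set.InjOn proj02
      ((Λ ⊓ Kdiag : Submodule ℝ ((V₀ × V₁) × (V₁ × V₂))) : Set ((V₀ × V₁) × (V₁ × V₂))) := by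
  refine injOn_of_disjoint_ker le_rfl (disjoint_iff.2 ?_)
  calc Λ ⊓ Kdiag ⊓ ker proj02 = Λ ⊓ symplComp (form0112 ω₀ ω₁ ω₂) Kdiag := by
        rw [symplComp_Kdiag h₀ h₁ h₂, inf_assoc, inf_comm Kdiag]
    _ = symplComp (form0112 ω₀ ω₁ ω₂) (Λ ⊔ Kdiag) := by rw [symplComp_sup, ← hΛ]
    _ = ⊥ := by rw [htrans, symplComp_top (separatingLeft_form0112 h₀ h₁ h₂)]

lemma isLagrangian_map_proj02 [FiniteDimensional ℝ V₀] [FiniteDimensional ℝ V₁]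
    [FiniteDimensional ℝ V₂] (h₀ : IsSymplecticForm ω₀) (h₁ : IsSymplecticForm ω₁)
    (h₂ : IsSymplecticForm ω₂) (hΛ : IsLagrangian (form0112 ω₀ ω₁ ω₂) Λ) :
    IsLagrangian (prodFormNegPos ω₀ ω₂) (map proj02 (Λ ⊓ Kdiag)) := by
  refine le_antisymm ?_ ?_
  · rintro _ ⟨x, hx, rfl⟩ _ ⟨y, hy, rfl⟩
    rw [← form0112_eq_of_mem_Kdiag hx.2 hy.2]
    exact hΛ.le hx.1 y hy.1
  · intro p hp
    have hp' : ((p.1, 0), (0, p.2)) ∈ symplComp (form0112 ω₀ ω₁ ω₂) (Λ ⊓ Kdiag) :=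
      fun w hw => by rw [form0112_outer]; exact hp _ (mem_map_of_mem hw)
    rw [symplComp_inf (h₀.form0112 h₁ h₂), ← hΛ,
      symplComp_Kdiag h₀.nondeg h₁.nondeg h₂.nondeg] at hp'
    obtain ⟨l, hl, k, ⟨hk, hkK⟩, hlk⟩ := mem_sup.1 hp'
    rw [← eq_sub_iff_add_eq] at hlk
    subst hlk
    refine ⟨_, ⟨hl, sub_mem (mem_Kdiag.2 rfl) hkK⟩, ?_⟩
    rw [map_sub, mem_ker.1 hk, sub_zero, proj02_apply]

end Composition

theorem statement7 {V₀ V₁ V₂ : Type*}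
    [AddCommGroup V₀] [Module ℝ V₀] [FiniteDimensional ℝ V₀]
    [AddCommGroup V₁] [Module ℝ V₁] [FiniteDimensional ℝ V₁]
    [AddCommGroup V₂] [Module ℝ V₂] [FiniteDimensional ℝ V₂]
    (ω₀ : V₀ →ₗ[ℝ] V₀ →ₗ[ℝ] ℝ) (ω₁ : V₁ →ₗ[ℝ] V₁ →ₗ[ℝ] ℝ) (ω₂ : V₂ →ₗ[ℝ] V₂ →ₗ[ℝ] ℝ)
    (hω₀ : IsSymplecticForm ω₀) (hω₁ : IsSymplecticForm ω₁) (hω₂ : IsSymplecticForm ω₂)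
    (Λ : Submodule ℝ ((V₀ × V₁) × (V₁ × V₂)))
    (hΛ : IsLagrangian (form0112 ω₀ ω₁ ω₂) Λ)
    (htrans : Λ ⊔ Kdiag = ⊤) :
    Set.InjOn (⇑proj02) ((Λ ⊓ Kdiag : Submodule ℝ ((V₀ × V₁) × (V₁ × V₂))) : Set ((V₀ × V₁) × (V₁ × V₂))) ∧
    IsLagrangian (prodFormNegPos ω₀ ω₂) (Submodule.map proj02 (Λ ⊓ Kdiag)) :=
  ⟨injOn_proj02 hω₀.nondeg hω₁.nondeg hω₂.nondeg hΛ htrans, isLagrangian_map_proj02 hω₀ hω₁ hω₂ hΛ⟩
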